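/- Let Γ be an even Artin graph, Δ an induced subgraph of Γ, A ⊆ V(Δ), and g, t ∈ G_Γ such that G_A ∪ gG_Ag^{-1} ⊆ tG_Δt^{-1}. Then there exists h ∈ G_Δ such that: (i) G_A = hG_Ah^{-1} if and only if G_A = gG_Ag^{-1}; (ii) G_A ∩ hG_Ah^{-1} is a parabolic subgroup of G_Δ if and only if G_A ∩ gG_Ag^{-1} is a parabolic subgroup of G_Γ. -/

import Mathlib

/-- An Artin graph: a simplicial graph with even/arbitrary labels; `m u v = 0`
means `u` and `v` are not joined by an edge, otherwise `m u v ≥ 2` is the label. -/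
structure ArtinGraph (V : Type) where
  m : V → V → ℕ
  symm : ∀ u v, m u v = m v u
  loopless : ∀ v, m v v = 0
  ne_one : ∀ u v, m u v ≠ 1

namespace ArtinGraph

variable {V : Type}

/-- `word u v n` is the prefix of length `n` of the alternating word `uvuv…`. -/
def word : V → V → ℕ → FreeGroup V
  | _, _, 0 => 1
  | u, v, n + 1 => FreeGroup.of u * word v u n

/-- The Artin relations of the graph. -/
def rels (Γ : ArtinGraph V) : Set (FreeGroup V) :=
  {r | ∃ u v, Γ.m u v ≠ 0 ∧ r = word u v (Γ.m u v) * (word v u (Γ.m u v))⁻¹}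

/-- The Artin group of an Artin graph. -/
def ArtinGroup (Γ : ArtinGraph V) : Type := PresentedGroup Γ.rels

instance (Γ : ArtinGraph V) : Group Γ.ArtinGroup :=
  inferInstanceAs (Group (PresentedGroup Γ.rels))

/-- The generator of the Artin group corresponding to a vertex. -/
def gen (Γ : ArtinGraph V) (v : V) : Γ.ArtinGroup := PresentedGroup.of v

/-- The standard parabolic subgroup on a set `S` of vertices. -/
def std (Γ : ArtinGraph V) (S : Set V) : Subgroup Γ.ArtinGroup :=
  Subgroup.closure (Γ.gen '' S)

/-- The conjugate `g H g⁻¹` of a subgroup. -/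
def conjP {G : Type*} [Group G] (g : G) (H : Subgroup G) : Subgroup G :=
  H.map (MulAut.conj g).toMonoidHom

/-- A parabolic subgroup is a conjugate of a standard parabolic subgroup. -/
def IsParabolic (Γ : ArtinGraph V) (P : Subgroup Γ.ArtinGroup) : Prop :=
  ∃ (S : Set V) (g : Γ.ArtinGroup), P = conjP g (Γ.std S)

/-- An Artin graph is even if all labels are even. -/
def IsEven (Γ : ArtinGraph V) : Prop := ∀ u v, Even (Γ.m u v)

/-- The FC condition for even Artin graphs: in every triangle at least two of
the three labels are equal to `2`. -/
def IsFC (Γ : ArtinGraph V) : Prop :=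
  ∀ u v w, Γ.m u v ≠ 0 → Γ.m v w ≠ 0 → Γ.m w u ≠ 0 →
    (Γ.m u v = 2 ∧ Γ.m v w = 2) ∨ (Γ.m v w = 2 ∧ Γ.m w u = 2) ∨
      (Γ.m u v = 2 ∧ Γ.m w u = 2)

/-- The link of a vertex. -/
def lk (Γ : ArtinGraph V) (x : V) : Set V := {u | Γ.m x u ≠ 0}

/-- The star of a vertex. -/
def star (Γ : ArtinGraph V) (x : V) : Set V := insert x (Γ.lk x)

end ArtinGraph

/-!
Since `Γ` is even, sending the generators outside `W` to `1` defines a retraction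
`ρ : G_Γ → G_W`. If `G_A` and `g G_A g⁻¹` both lie in `t G_W t⁻¹`, then applying `ρ` to
`t⁻¹ x t ∈ G_W` shows that `z = t ρ(t)⁻¹` satisfies `z ρ(x) z⁻¹ = x` on both subgroups.
Hence `z` normalises `G_A` and `g G_A g⁻¹ = z h G_A h⁻¹ z⁻¹` with `h = ρ(g) ∈ G_W`, so both
properties transfer along conjugation by `z`. Finally, a subgroup of `G_W` that is
`G_Γ`-parabolic is `G_W`-parabolic, by applying `ρ` to the conjugator.
-/

namespace ArtinGraph

section Conjugation

variable {G : Type*} [Group G]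

lemma mem_conjP {g x : G} {H : Subgroup G} : x ∈ conjP g H ↔ g⁻¹ * x * g ∈ H := by
  constructor
  · rintro ⟨y, hy, rfl⟩
    simpa [MulAut.conj_apply, mul_assoc] using hy
  · intro h
    exact ⟨g⁻¹ * x * g, h, by simp [MulAut.conj_apply]; group⟩

lemma conjP_conjP (a b : G) (H : Subgroup G) : conjP a (conjP b H) = conjP (a * b) H := by
  ext x
  simp only [mem_conjP, mul_inv_rev]
  group

lemma conjP_inf (a : G) (H K : Subgroup G) : conjP a (H ⊓ K) = conjP a H ⊓ conjP a K := by
  ext x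
  simp [mem_conjP]

lemma conjP_injective (a : G) : Function.Injective (conjP a) := by
  intro H K h
  ext x
  simpa [mem_conjP, mul_assoc] using SetLike.ext_iff.mp h (a * x * a⁻¹)

lemma map_conjP {H : Type*} [Group H] (f : G →* H) (a : G) (K : Subgroup G) :
    (conjP a K).map f = conjP (f a) (K.map f) := by
  simp only [conjP, Subgroup.map_map]
  congr 1
  ext x
  simp [MulAut.conj_apply]

end Conjugation

section Retraction

variable {G : Type*} [Group G] {K : Subgroup G} {ρ : G →* G}

lemma map_eq_self_of_le (hρ : ∀ x ∈ K, ρ x = x) {Q : Subgroup G} (hQ : Q ≤ K) :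
    Q.map ρ = Q := by
  ext x
  constructor
  · rintro ⟨y, hy, rfl⟩
    rwa [hρ y (hQ hy)]
  · exact fun hx => ⟨x, hx, hρ x (hQ hx)⟩

lemma conjP_map_of_le_conjP (hρ : ∀ x ∈ K, ρ x = x) {t : G} {H : Subgroup G}
    (hH : H ≤ conjP t K) : conjP (t * (ρ t)⁻¹) (H.map ρ) = H := by
  have key : ∀ y ∈ H, t * (ρ t)⁻¹ * ρ y * (t * (ρ t)⁻¹)⁻¹ = y := by
    intro y hy
    have hfix := hρ _ (mem_conjP.mp (hH hy))
    simp only [map_mul, map_inv] at hfix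
    calc t * (ρ t)⁻¹ * ρ y * (t * (ρ t)⁻¹)⁻¹ = t * ((ρ t)⁻¹ * ρ y * ρ t) * t⁻¹ := by group
      _ = y := by rw [hfix]; group
  ext x
  constructor
  · rintro ⟨_, ⟨y, hy, rfl⟩, rfl⟩
    show t * (ρ t)⁻¹ * ρ y * (t * (ρ t)⁻¹)⁻¹ ∈ H
    rwa [key y hy]
  · intro hx
    exact ⟨ρ x, ⟨x, hx, rfl⟩, key x hx⟩

end Retraction

variable {V : Type} {Γ : ArtinGraph V}

lemma gen_mem_std {W : Set V} {v : V} (h : v ∈ W) : Γ.gen v ∈ Γ.std W :=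
  Subgroup.subset_closure ⟨v, h, rfl⟩

lemma std_mono {S T : Set V} (h : S ⊆ T) : Γ.std S ≤ Γ.std T :=
  Subgroup.closure_mono (Set.image_mono h)

lemma lift_word_congr {G : Type*} [Group G] {f f' : V → G} {u v : V} (hu : f u = f' u)
    (hv : f v = f' v) (n : ℕ) :
    FreeGroup.lift f (word u v n) = FreeGroup.lift f' (word u v n) := by
  induction n generalizing u v with
  | zero => rfl
  | succ n ih => simp only [word, map_mul, FreeGroup.lift_apply_of, hu, ih hv hu]

lemma lift_word_two_mul {G : Type*} [Group G] (f : V → G) (u v : V) (k : ℕ) :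
    FreeGroup.lift f (word u v (2 * k)) = (f u * f v) ^ k := by
  induction k with
  | zero => simp [word]
  | succ k ih =>
    rw [show 2 * (k + 1) = 2 * k + 1 + 1 by ring, word, word, map_mul, map_mul,
      FreeGroup.lift_apply_of, FreeGroup.lift_apply_of, ih, pow_succ']
    group

open Classical in
noncomputable def retractionGen (Γ : ArtinGraph V) (W : Set V) (v : V) : Γ.ArtinGroup :=
  if v ∈ W then Γ.gen v else 1

lemma retractionGen_rels (hEven : Γ.IsEven) (W : Set V) :
    ∀ r ∈ Γ.rels, FreeGroup.lift (retractionGen Γ W) r = 1 := by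
  rintro r hr
  obtain ⟨u, v, -, rfl⟩ := id hr
  by_cases hW : u ∈ W ∧ v ∈ W
  · have hu : retractionGen Γ W u = Γ.gen u := if_pos hW.1
    have hv : retractionGen Γ W v = Γ.gen v := if_pos hW.2
    refine Eq.trans ?_ (PresentedGroup.one_of_mem hr)
    rw [FreeGroup.lift_unique (PresentedGroup.mk Γ.rels) (fun _ => rfl)]
    simp only [map_mul, map_inv, lift_word_congr hu hv, lift_word_congr hv hu]
    rfl
  · -- one generator dies, so both alternating words of even length become the same power
    obtain ⟨k, hk⟩ := hEven u v
    rw [hk, ← two_mul, map_mul, map_inv, lift_word_two_mul, lift_word_two_mul]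
    by_cases hu : u ∈ W <;> simp_all [retractionGen]

noncomputable def retraction (hEven : Γ.IsEven) (W : Set V) : Γ.ArtinGroup →* Γ.ArtinGroup :=
  PresentedGroup.toGroup (retractionGen_rels hEven W)

lemma retraction_gen (hEven : Γ.IsEven) (W : Set V) (v : V) :
    retraction hEven W (Γ.gen v) = retractionGen Γ W v :=
  PresentedGroup.toGroup.of (retractionGen_rels hEven W)

lemma retraction_mem (hEven : Γ.IsEven) (W : Set V) (x : Γ.ArtinGroup) :
    retraction hEven W x ∈ Γ.std W := by
  refine PresentedGroup.generated_by Γ.rels ((Γ.std W).comap (retraction hEven W))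
    (fun v => ?_) x
  show retraction hEven W (Γ.gen v) ∈ Γ.std W
  rw [retraction_gen, retractionGen]
  split_ifs with hv
  · exact gen_mem_std hv
  · exact one_mem _

lemma retraction_of_mem (hEven : Γ.IsEven) {W : Set V} {x : Γ.ArtinGroup}
    (hx : x ∈ Γ.std W) : retraction hEven W x = x := by
  refine MonoidHom.eqOn_closure (g := MonoidHom.id _) ?_ hx
  rintro _ ⟨v, hv, rfl⟩
  simp [retraction_gen, retractionGen, hv]

lemma map_retraction_std (hEven : Γ.IsEven) (W S : Set V) :
    (Γ.std S).map (retraction hEven W) = Γ.std (S ∩ W) := by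
  rw [std, MonoidHom.map_closure]
  apply le_antisymm
  · rw [Subgroup.closure_le]
    rintro _ ⟨_, ⟨v, hv, rfl⟩, rfl⟩
    rw [SetLike.mem_coe, retraction_gen, retractionGen]
    split_ifs with hvW
    · exact gen_mem_std ⟨hv, hvW⟩
    · exact one_mem _
  · rw [std, Subgroup.closure_le]
    rintro _ ⟨v, hv, rfl⟩
    exact Subgroup.subset_closure
      ⟨Γ.gen v, ⟨v, hv.1, rfl⟩, retraction_of_mem hEven (gen_mem_std hv.2)⟩

lemma isParabolic_conjP_iff (z : Γ.ArtinGroup) (Q : Subgroup Γ.ArtinGroup) :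
    Γ.IsParabolic (conjP z Q) ↔ Γ.IsParabolic Q := by
  constructor
  · rintro ⟨S, c, hc⟩
    exact ⟨S, z⁻¹ * c, conjP_injective z (by rw [hc, conjP_conjP, mul_inv_cancel_left])⟩
  · rintro ⟨S, c, hc⟩
    exact ⟨S, z * c, by rw [hc, conjP_conjP]⟩

/-- The `Δ`-parabolic subgroups, for `Δ` the subgraph of `Γ` induced on `W`. -/
def IsParabolicIn (Γ : ArtinGraph V) (W : Set V) (P : Subgroup Γ.ArtinGroup) : Prop :=
  ∃ S : Set V, S ⊆ W ∧ ∃ d ∈ Γ.std W, P = conjP d (Γ.std S)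

lemma isParabolicIn_iff_isParabolic (hEven : Γ.IsEven) {W : Set V} {Q : Subgroup Γ.ArtinGroup}
    (hQ : Q ≤ Γ.std W) : Γ.IsParabolicIn W Q ↔ Γ.IsParabolic Q := by
  constructor
  · rintro ⟨S, -, d, -, hd⟩
    exact ⟨S, d, hd⟩
  · rintro ⟨S, c, hc⟩
    refine ⟨S ∩ W, Set.inter_subset_right, retraction hEven W c, retraction_mem hEven W c, ?_⟩
    calc Q = Q.map (retraction hEven W) :=
          (map_eq_self_of_le (fun _ => retraction_of_mem hEven) hQ).symm
      _ = conjP (retraction hEven W c) (Γ.std (S ∩ W)) := by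
          rw [hc, map_conjP, map_retraction_std]

end ArtinGraph

open ArtinGraph in
/-- reduction to subgraphs. `Δ` is the induced subgraph on `W ⊆ V`,
whose Artin group sits inside `G_Γ` as `G_W`; a `Δ`-parabolic subgroup is a
conjugate (by an element of `G_W`) of a standard parabolic on a subset of `W`.
If `G_A ∪ gG_Ag⁻¹ ⊆ tG_Wt⁻¹`, then there is `h ∈ G_W` such that
(i) `G_A = hG_Ah⁻¹ ↔ G_A = gG_Ag⁻¹` and
(ii) `G_A ∩ hG_Ah⁻¹` is `Δ`-parabolic iff `G_A ∩ gG_Ag⁻¹` is `Γ`-parabolic. -/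
theorem stmt8 {V : Type} (Γ : ArtinGraph V) (hEven : Γ.IsEven) (W : Set V)
    (A : Set V) (hA : A ⊆ W) (g t : Γ.ArtinGroup)
    (hsub : Γ.std A ≤ conjP t (Γ.std W) ∧ conjP g (Γ.std A) ≤ conjP t (Γ.std W)) :
    ∃ h ∈ Γ.std W,
      ((Γ.std A = conjP h (Γ.std A)) ↔ (Γ.std A = conjP g (Γ.std A))) ∧
      ((∃ S : Set V, S ⊆ W ∧ ∃ d ∈ Γ.std W,
          Γ.std A ⊓ conjP h (Γ.std A) = conjP d (Γ.std S)) ↔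
        Γ.IsParabolic (Γ.std A ⊓ conjP g (Γ.std A))) := by
  set ρ := retraction hEven W
  have hfix : ∀ x ∈ Γ.std W, ρ x = x := fun _ => retraction_of_mem hEven
  have hAW : Γ.std A ≤ Γ.std W := std_mono hA
  set z := t * (ρ t)⁻¹
  have hz : conjP z (Γ.std A) = Γ.std A := by
    simpa only [map_eq_self_of_le hfix hAW] using conjP_map_of_le_conjP hfix hsub.1
  have hg : conjP z (conjP (ρ g) (Γ.std A)) = conjP g (Γ.std A) := by
    simpa only [map_conjP, map_eq_self_of_le hfix hAW] using conjP_map_of_le_conjP hfix hsub.2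
  refine ⟨ρ g, retraction_mem hEven W g, ?_, ?_⟩
  · rw [← hg, ← (conjP_injective z).eq_iff, hz]
  · have hinf : Γ.std A ⊓ conjP g (Γ.std A) = conjP z (Γ.std A ⊓ conjP (ρ g) (Γ.std A)) := by
      rw [conjP_inf, hz, hg]
    rw [hinf, isParabolic_conjP_iff]
    exact isParabolicIn_iff_isParabolic hEven (inf_le_left.trans hAW)
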